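/- For every positive integer n and every choice of letters x₁,…,xₙ ∈ A, the maximum and minimum components of the Viterbi state Sⁿ differ by at most k: max_{v ∈ V_G} Sⁿ(v) − min_{v ∈ V_G} Sⁿ(v) ≤ k. -/
import Mathlib


/-- Hamming distance on the alphabet `A`. -/
def ham {A : Type*} [DecidableEq A] (x y : A) : ℕ := if x = y then 0 else 1

/-- `EdgeChain src dst n e` : the first `n` edges of the edge sequence `e` form a
directed path in the labelled graph with source map `src` and destination map `dst`. -/
def EdgeChain {V E : Type*} (src dst : E → V) (n : ℕ) (e : ℕ → E) : Prop :=
  ∀ i : ℕ, i + 1 < n → dst (e i) = src (e (i + 1))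

/-- The graph is strongly connected: for any ordered pair of vertices there is a
(nonempty) directed path from the first to the second. -/
def StronglyConnected {V E : Type*} (src dst : E → V) : Prop :=
  ∀ u v : V, ∃ (l : List E) (h : l ≠ []),
    List.Chain' (fun e f => dst e = src f) l ∧ src (l.head h) = u ∧ dst (l.getLast h) = v

/-- The Viterbi transition operator `V` : `Vop src dst lab s x v` is the minimum of
`s (src e) + d(x, lab e)` over all edges `e` ending at `v`. -/
noncomputable def Vop {V E A : Type*} [DecidableEq A] (src dst : E → V) (lab : E → A)
    (s : V → ℕ) (x : A) : V → ℕ :=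
  fun v => sInf {m : ℕ | ∃ e : E, dst e = v ∧ m = s (src e) + ham x (lab e)}

/-- Minimum component of a state. -/
noncomputable def minS {V : Type*} (s : V → ℕ) : ℕ := sInf (Set.range s)

/-- The reduced Viterbi transition operator `Ṽ`: subtract from `V(s,x)` its minimum
component. -/
noncomputable def Vred {V E A : Type*} [DecidableEq A] (src dst : E → V) (lab : E → A)
    (s : V → ℕ) (x : A) : V → ℕ :=
  fun v => Vop src dst lab s x v - minS (Vop src dst lab s x)

/-- The Viterbi state sequence: `S⁰` is the zero state and `Sⁱ = V(S^{i-1}, xᵢ)`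
(the letter `xᵢ` of the paper is `x (i-1)` here). -/
noncomputable def VSeq {V E A : Type*} [DecidableEq A] (src dst : E → V) (lab : E → A)
    (x : ℕ → A) : ℕ → V → ℕ
  | 0 => fun _ => 0
  | i + 1 => Vop src dst lab (VSeq src dst lab x i) (x i)

/-- The reduced Viterbi state sequence `S̃ⁱ(v) = Sⁱ(v) - min Sⁱ`. -/
noncomputable def SredSeq {V E A : Type*} [DecidableEq A] (src dst : E → V) (lab : E → A)
    (x : ℕ → A) (i : ℕ) : V → ℕ :=
  fun v => VSeq src dst lab x i v - minS (VSeq src dst lab x i)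

/-- The state space `𝒮_G`: the zero state together with everything obtainable from it
by finitely many applications of the reduced Viterbi transition operator. -/
def SG {V E A : Type*} [DecidableEq A] (src dst : E → V) (lab : E → A) : Set (V → ℕ) :=
  { s | ∃ l : List A, s = l.foldl (Vred src dst lab) (fun _ => 0) }

/-- `PrimIndex src dst k` : `k` is positive and any vertex can be reached from any
vertex by a directed path of length exactly `k`. -/
def PrimIndex {V E : Type*} (src dst : E → V) (k : ℕ) : Prop :=
  0 < k ∧ ∀ u v : V, ∃ e : ℕ → E,
    EdgeChain src dst k e ∧ src (e 0) = u ∧ dst (e (k - 1)) = v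

/-- Minimum total Hamming distortion over all directed paths of length `n`. -/
noncomputable def minDist {V E A : Type*} [DecidableEq A] (src dst : E → V) (lab : E → A)
    (n : ℕ) (x : Fin n → A) : ℕ :=
  sInf {m : ℕ | ∃ e : ℕ → E, EdgeChain src dst n e ∧
    m = ∑ i : Fin n, ham (x i) (lab (e i.1))}

/-- `aSeq src dst lab p n` is the expected minimum path distortion
`a_n = E[ min_{paths} Σ d(Xᵢ, L(eᵢ)) ]` for the i.i.d. source with letter distribution `p`. -/
noncomputable def aSeq {V E A : Type*} [DecidableEq A] [Fintype A] (src dst : E → V)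
    (lab : E → A) (p : A → ℝ) (n : ℕ) : ℝ :=
  ∑ x : Fin n → A, (∏ i, p (x i)) * (minDist src dst lab n x : ℝ)

section Aux

variable {V E A : Type*} [DecidableEq A]

lemma edge_into {V E : Type*} (src dst : E → V) (hconn : StronglyConnected src dst)
    (v : V) : ∃ e : E, dst e = v := by
  obtain ⟨l, h, _, _, hlast⟩ := hconn v v
  exact ⟨l.getLast h, hlast⟩

lemma ham_le_one (x y : A) : ham x y ≤ 1 := by
  unfold ham; split <;> omega

lemma vop_le (src dst : E → V) (lab : E → A) (s : V → ℕ) (x : A) {e : E} {v : V}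
    (h : dst e = v) : Vop src dst lab s x v ≤ s (src e) + 1 := by
  refine le_trans (Nat.sInf_le ⟨e, h, rfl⟩) ?_
  have := ham_le_one x (lab e)
  omega

lemma minS_le (s : V → ℕ) (v : V) : minS s ≤ s v := Nat.sInf_le ⟨v, rfl⟩

lemma minS_le_vop [Nonempty V] (src dst : E → V) (lab : E → A)
    (heg : ∀ v : V, ∃ e : E, dst e = v) (s : V → ℕ) (x : A) (v : V) :
    minS s ≤ Vop src dst lab s x v := by
  obtain ⟨e, he⟩ := heg v
  have hne : {m : ℕ | ∃ e : E, dst e = v ∧ m = s (src e) + ham x (lab e)}.Nonempty :=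
    ⟨_, e, he, rfl⟩
  obtain ⟨e', _, hm⟩ := Nat.sInf_mem hne
  show minS s ≤ sInf {m : ℕ | ∃ e : E, dst e = v ∧ m = s (src e) + ham x (lab e)}
  rw [hm]
  exact le_trans (minS_le s (src e')) (Nat.le_add_right _ _)

lemma minS_VSeq_mono [Nonempty V] (src dst : E → V) (lab : E → A)
    (heg : ∀ v : V, ∃ e : E, dst e = v) (x : ℕ → A) (m j : ℕ) :
    minS (VSeq src dst lab x m) ≤ minS (VSeq src dst lab x (m + j)) := by
  induction j with
  | zero => exact le_rfl
  | succ j ih =>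
    refine le_trans ih ?_
    have hne : (Set.range (VSeq src dst lab x (m + (j + 1)))).Nonempty :=
      Set.range_nonempty _
    refine le_csInf hne ?_
    rintro b ⟨v, rfl⟩
    exact minS_le_vop src dst lab heg _ _ v

lemma VSeq_le_self (src dst : E → V) (lab : E → A)
    (heg : ∀ v : V, ∃ e : E, dst e = v) (x : ℕ → A) (n : ℕ) (v : V) :
    VSeq src dst lab x n v ≤ n := by
  induction n generalizing v with
  | zero => exact le_rfl
  | succ n ih =>
    obtain ⟨e, he⟩ := heg v
    have := vop_le src dst lab (VSeq src dst lab x n) (x n) he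
    have := ih (src e)
    show Vop src dst lab (VSeq src dst lab x n) (x n) v ≤ n + 1
    omega

lemma VSeq_path_le (src dst : E → V) (lab : E → A) (x : ℕ → A)
    (m k : ℕ) (hkpos : 0 < k) (e : ℕ → E) (hc : EdgeChain src dst k e) :
    ∀ j, 0 < j → j ≤ k →
      VSeq src dst lab x (m + j) (dst (e (j - 1))) ≤ VSeq src dst lab x m (src (e 0)) + j := by
  intro j
  induction j with
  | zero => omega
  | succ j ih =>
    intro _ hjk
    rcases Nat.eq_zero_or_pos j with hj0 | hjpos
    · subst hj0
      exact vop_le src dst lab _ (x m) rfl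
    · have hsrc : src (e j) = dst (e (j - 1)) := by
        have := hc (j - 1) (by omega)
        have : j - 1 + 1 = j := by omega
        rw [← this]
        exact (hc (j - 1) (by omega)).symm
      have h1 : VSeq src dst lab x (m + (j + 1)) (dst (e j)) ≤
          VSeq src dst lab x (m + j) (src (e j)) + 1 :=
        vop_le src dst lab (VSeq src dst lab x (m + j)) (x (m + j)) rfl
      have h2 := ih hjpos (by omega)
      rw [hsrc] at h1
      simp only [Nat.add_sub_cancel]
      omega

end Aux

/-- For every positive `n` and letters `x₁,…,xₙ`, the maximum and minimum
components of the Viterbi state `Sⁿ` differ by at most `k`, where `k` is the smallest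
positive integer such that any vertex can be reached from any vertex by a path of
length exactly `k`. -/
theorem viterbi_state_max_sub_min_le
    {V E A : Type*} [Fintype V] [Nonempty V] [Fintype E] [Fintype A] [DecidableEq A]
    (src dst : E → V) (lab : E → A) (hconn : StronglyConnected src dst)
    (k : ℕ) (hk : IsLeast {j : ℕ | PrimIndex src dst j} k)
    (n : ℕ) (hn : 0 < n) (x : ℕ → A) :
    Finset.univ.sup' Finset.univ_nonempty (VSeq src dst lab x n)
      - minS (VSeq src dst lab x n) ≤ k := by
  have heg : ∀ v : V, ∃ e : E, dst e = v := edge_into src dst hconn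
  obtain ⟨hkmem, _⟩ := hk
  obtain ⟨hkpos, hpath⟩ := hkmem
  set S := VSeq src dst lab x with hS
  have key : ∀ v : V, S n v ≤ minS (S n) + k := by
    intro v
    rcases le_or_gt n k with hnk | hnk
    · calc S n v ≤ n := VSeq_le_self src dst lab heg x n v
        _ ≤ k := hnk
        _ ≤ minS (S n) + k := Nat.le_add_left _ _
    · set m := n - k with hm
      have hmk : n = m + k := by omega
      obtain ⟨u, hu⟩ := Nat.sInf_mem (Set.range_nonempty (S m))
      obtain ⟨e, hc, hsrc, hdst⟩ := hpath u v
      have h1 : S (m + k) (dst (e (k - 1))) ≤ S m (src (e 0)) + k :=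
        VSeq_path_le src dst lab x m k hkpos e hc k hkpos le_rfl
      rw [hsrc, hdst, hu] at h1
      have h2 : minS (S m) ≤ minS (S (m + k)) := minS_VSeq_mono src dst lab heg x m k
      simp only [minS] at h2
      rw [hmk]
      show S (m + k) v ≤ sInf (Set.range (S (m + k))) + k
      omega
  have hsup : Finset.univ.sup' Finset.univ_nonempty (S n) ≤ minS (S n) + k :=
    Finset.sup'_le _ _ fun v _ => key v
  omega
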